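/- arXiv:2511.14740 — 3 statements merged into one kernel-verified Lean document; each statement's English description precedes it below -/
import Mathlib

section
/- Let X = (X_1,…,X_d) be a multivariate Poisson random vector, i.e. the X_j ~ Po(λ_j) are independent with λ = (λ_1,…,λ_d), λ_j ≥ 0, and let A = (a_{ij}) ∈ [0,1]^{c×d} be a matrix whose columns a_j satisfy |a_j| ≤ 1. Then the multinomial re-marking Y = A ∘ X is multivariate Poisson with parameter Aλ: the coordinates Y_i are independent with Y_i ~ Po((Aλ)_i) = Po(Σ_{j=1}^d a_{ij} λ_j). -/
/-!
Conditionally on `X j = n`, the marks `Z j` are multinomial; averaging against the Poisson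
weights, `e^{-λ} λ^n / n!` splits into `∏ i, e^{-a_ij λ} (a_ij λ)^{z_i} / z_i!` times the
Poisson(`λ (1 - |a_j|)`) weight of the `n - |z|` unmarked points, which sums to one. Together
with the independence of the `X j`, this makes all the `Z j i` independent with
`Z j i ~ Po(a_ij λ_j)`. The coordinates `Y i = ∑ j, Z j i` are then functions of disjoint
blocks of independent variables, hence independent, and a sum of independent Poisson variables
is Poisson with the summed rate.
-/

open MeasureTheory ProbabilityTheory ENNReal

/-- The multinomial probability mass function with parameters `n` and `a`, as an
`ℝ≥0∞`-valued function: `p(y) = (n choose y) ∏ i, a i ^ y i * (1 - |a|) ^ (n - |y|)`,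
interpreted as `0` when `|y| > n`. -/
noncomputable def multinomialENN {c : ℕ} (n : ℕ) (a : Fin c → ℝ) (y : Fin c → ℕ) : ℝ≥0∞ :=
  if (∑ i, y i) ≤ n then
    ENNReal.ofReal (((n.factorial : ℝ) /
        ((∏ i, ((y i).factorial : ℝ)) * ((n - ∑ i, y i).factorial : ℝ)))
      * (∏ i, a i ^ y i) * (1 - ∑ i, a i) ^ (n - ∑ i, y i))
  else 0

/-- The Poisson probability mass function with rate `lam ≥ 0`, as an `ℝ≥0∞`-valued
function: `p(k) = exp(-lam) * lam^k / k!`. -/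
noncomputable def poissonENN (lam : ℝ) (k : ℕ) : ℝ≥0∞ :=
  ENNReal.ofReal (Real.exp (-lam) * lam ^ k / k.factorial)

open scoped NNReal

lemma poissonENN_coe (r : ℝ≥0) (k : ℕ) : poissonENN r k = poissonMeasure r {k} :=
  (poissonMeasure_singleton r k).symm

lemma multinomialENN_eq_zero_of_lt {c n : ℕ} {a : Fin c → ℝ} {y : Fin c → ℕ}
    (h : n < ∑ i, y i) : multinomialENN n a y = 0 :=
  if_neg (not_le.2 h)

lemma multinomialENN_add_mul_poissonMeasure {c : ℕ} (a : Fin c → ℝ≥0) (ha : ∑ i, a i ≤ 1)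
    (r : ℝ≥0) (z : Fin c → ℕ) (m : ℕ) :
    multinomialENN (m + ∑ i, z i) (fun i => a i) z * poissonMeasure r {m + ∑ i, z i}
      = (∏ i, poissonMeasure (a i * r) {z i}) * poissonMeasure (r * (1 - ∑ i, a i)) {m} := by
  have hcoe : ((1 - ∑ i, a i : ℝ≥0) : ℝ) = 1 - ∑ i, (a i : ℝ) := by
    rw [NNReal.coe_sub ha, NNReal.coe_sum, NNReal.coe_one]
  simp_rw [multinomialENN, if_pos (Nat.le_add_left _ _), Nat.add_sub_cancel,
    poissonMeasure_singleton]
  rw [← ENNReal.ofReal_mul' (by positivity),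
    ← ENNReal.ofReal_prod_of_nonneg (fun _ _ => by positivity),
    ← ENNReal.ofReal_mul (by positivity)]
  congr 1
  push_cast [hcoe]
  have hexp : Real.exp (-r)
      = Real.exp (∑ i, -(a i * r : ℝ)) * Real.exp (-(r * (1 - ∑ i, (a i : ℝ)))) := by
    rw [← Real.exp_add, Finset.sum_neg_distrib, ← Finset.sum_mul]
    ring_nf
  rw [Finset.prod_div_distrib, Finset.prod_mul_distrib, ← Real.exp_sum]
  simp_rw [mul_pow]
  rw [Finset.prod_mul_distrib, Finset.prod_pow_eq_pow_sum, hexp]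
  generalize Real.exp (∑ i, -(a i * r : ℝ)) = E₁
  generalize Real.exp (-(r * (1 - ∑ i, (a i : ℝ)))) = E₂
  field_simp
  ring

lemma lintegral_multinomialENN_poissonMeasure {c : ℕ} (a : Fin c → ℝ≥0) (ha : ∑ i, a i ≤ 1)
    (r : ℝ≥0) (z : Fin c → ℕ) :
    ∫⁻ n, multinomialENN n (fun i => a i) z ∂poissonMeasure r
      = ∏ i, poissonMeasure (a i * r) {z i} := by
  rw [lintegral_countable', ← (add_left_injective (∑ i, z i)).tsum_eq]
  · simp_rw [multinomialENN_add_mul_poissonMeasure a ha, ENNReal.tsum_mul_left]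
    have htotal : ∑' m, poissonMeasure (r * (1 - ∑ i, a i)) {m} = 1 := by
      simpa using (lintegral_countable' (μ := poissonMeasure (r * (1 - ∑ i, a i))) 1).symm
    rw [htotal, mul_one]
  · intro n hn
    rcases le_or_gt (∑ i, z i) n with hle | hlt
    · exact ⟨n - ∑ i, z i, Nat.sub_add_cancel hle⟩
    · exact absurd (by simp [multinomialENN_eq_zero_of_lt hlt]) hn

namespace ProbabilityTheory

lemma poissonMeasure_zero : poissonMeasure 0 = Measure.dirac 0 := by
  refine Measure.ext_of_singleton fun k => ?_
  rcases k with _ | k <;> simp [poissonMeasure_singleton]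

variable {Ω : Type*} [MeasurableSpace Ω] {P : Measure Ω}

lemma measure_eq_tsum_measure_preimage_singleton_inter {α : Type*} [MeasurableSpace α]
    [Countable α] [MeasurableSingletonClass α] {X : Ω → α} (hX : Measurable X) (S : Set Ω) :
    P S = ∑' x, P (X ⁻¹' {x} ∩ S) := by
  have hfib : ∀ x, MeasurableSet (X ⁻¹' {x}) := fun x => hX (measurableSet_singleton x)
  calc P S = P.restrict S (⋃ x, X ⁻¹' {x}) := by
        rw [← Set.preimage_iUnion, Set.iUnion_of_singleton, Set.preimage_univ,
          Measure.restrict_apply_univ]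
    _ = ∑' x, P.restrict S (X ⁻¹' {x}) :=
      measure_iUnion (fun x y hxy => (Set.disjoint_singleton.2 hxy).preimage X) hfib
    _ = ∑' x, P (X ⁻¹' {x} ∩ S) := tsum_congr fun x => Measure.restrict_apply (hfib x)

lemma hasLaw_of_measure_preimage_singleton {α : Type*} [MeasurableSpace α] [Countable α]
    [MeasurableSingletonClass α] {X : Ω → α} {μ : Measure α} (hX : AEMeasurable X P)
    (h : ∀ a, P (X ⁻¹' {a}) = μ {a}) : HasLaw X μ P :=
  ⟨hX, Measure.ext_of_singleton fun a => by
    rw [Measure.map_apply_of_aemeasurable hX (measurableSet_singleton a), h]⟩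

lemma HasLaw.iIndepFun_of_pi {ι : Type*} [Fintype ι] {𝓧 : ι → Type*}
    [∀ i, MeasurableSpace (𝓧 i)] {μ : ∀ i, Measure (𝓧 i)} [∀ i, IsProbabilityMeasure (μ i)]
    {W : Ω → ∀ i, 𝓧 i} (hW : HasLaw W (Measure.pi μ) P) : iIndepFun (fun i ω => W ω i) P :=
  have := hW.isProbabilityMeasure
  (iIndepFun_iff_hasLaw_pi_pi fun i => (measurePreserving_eval μ i).comp_hasLaw hW).2 hW

lemma iIndepFun.hasLaw_finsetSum_poissonMeasure {ι : Type*} {X : ι → Ω → ℕ} {r : ι → ℝ≥0}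
    (hX : iIndepFun X P) (hlaw : ∀ i, HasLaw (X i) (poissonMeasure (r i)) P) (s : Finset ι) :
    HasLaw (∑ i ∈ s, X i) (poissonMeasure (∑ i ∈ s, r i)) P := by
  have := hX.isProbabilityMeasure
  induction s using Finset.cons_induction with
  | empty =>
    simpa [poissonMeasure_zero] using hasLaw_dirac_of_ae_eq (P := P) (x := (0 : ℕ)) (by rfl)
  | cons a s ha ih =>
    rw [Finset.sum_cons, Finset.sum_cons, add_comm, add_comm (r a)]
    exact (hX.indepFun_finsetSum_of_notMem₀ (fun i => (hlaw i).aemeasurable)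
      ha).hasLaw_add_poissonMeasure ih (hlaw a)

lemma hasLaw_sum_pi_poissonMeasure {ι : Type*} [Fintype ι] (r : ι → ℝ≥0) :
    HasLaw (fun v : ι → ℕ => ∑ i, v i) (poissonMeasure (∑ i, r i))
      (Measure.pi fun i => poissonMeasure (r i)) := by
  have hcoord : ∀ i, HasLaw (fun v : ι → ℕ => v i) (poissonMeasure (r i))
      (Measure.pi fun i => poissonMeasure (r i)) :=
    fun i => (measurePreserving_eval (fun i => poissonMeasure (r i)) i).hasLaw
  simpa [Finset.sum_fn] using
    ((iIndepFun_iff_hasLaw_pi_pi hcoord).2 HasLaw.id).hasLaw_finsetSum_poissonMeasure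
      hcoord Finset.univ

lemma hasLaw_marks_of_poisson {ι : Type*} [Fintype ι] {c : ℕ} {A : Fin c → ι → ℝ≥0}
    {lam : ι → ℝ≥0} (hA : ∀ j, ∑ i, A i j ≤ 1) {X : Ω → ι → ℕ} {Z : Ω → ι → Fin c → ℕ}
    (hXm : Measurable X) (hZm : Measurable Z) (hXindep : iIndepFun (fun j ω => X ω j) P)
    (hXlaw : ∀ j, HasLaw (fun ω => X ω j) (poissonMeasure (lam j)) P)
    (hMark : ∀ x z, P {ω | X ω = x ∧ Z ω = z}
      = P {ω | X ω = x} * ∏ j, multinomialENN (x j) (fun i => A i j) (z j)) :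
    HasLaw (fun ω i j => Z ω j i)
      (Measure.pi fun i => Measure.pi fun j => poissonMeasure (A i j * lam j)) P := by
  refine hasLaw_of_measure_preimage_singleton (by fun_prop) fun w => ?_
  set g : ι → ℕ → ℝ≥0∞ := fun j n => multinomialENN n (fun i => A i j) (fun i => w i j)
  have hset : (fun ω i j => Z ω j i) ⁻¹' {w} = Z ⁻¹' {fun j i => w i j} := by
    ext ω
    simp only [Set.mem_preimage, Set.mem_singleton_iff, funext_iff]
    exact forall_comm
  calc P ((fun ω i j => Z ω j i) ⁻¹' {w})
      = ∑' x, P (X ⁻¹' {x} ∩ Z ⁻¹' {fun j i => w i j}) := by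
        rw [hset, measure_eq_tsum_measure_preimage_singleton_inter hXm]
    _ = ∑' x, (∏ j, g j (x j)) * P.map X {x} := by
        refine tsum_congr fun x => ?_
        rw [Measure.map_apply hXm (measurableSet_singleton x), mul_comm]
        exact hMark x _
    _ = ∏ j, ∫⁻ ω, g j (X ω j) ∂P := by
        rw [← lintegral_countable', lintegral_map .of_discrete hXm]
        exact lintegral_prod_eq_prod_lintegral_of_indepFun _ _
          (hXindep.comp (fun j => g j) fun _ => .of_discrete) fun j => by fun_prop
    _ = ∏ j, ∏ i, poissonMeasure (A i j * lam j) {w i j} := by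
        refine Finset.prod_congr rfl fun j _ => ?_
        rw [(hXlaw j).lintegral_comp .of_discrete]
        exact lintegral_multinomialENN_poissonMeasure _ (hA j) _ _
    _ = _ := by
        simp_rw [Measure.pi_singleton]
        exact Finset.prod_comm

end ProbabilityTheory

theorem remarking_of_poisson_general
    {Ω : Type*} [MeasurableSpace Ω] (P : Measure Ω)
    {c d : ℕ} (A : Fin c → Fin d → ℝ)
    (hA : ∀ i j, A i j ∈ Set.Icc (0 : ℝ) 1) (hAcol : ∀ j, ∑ i, A i j ≤ 1)
    (lam : Fin d → ℝ) (hlam : ∀ j, 0 ≤ lam j)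
    (X : Ω → Fin d → ℕ) (Z : Ω → Fin d → Fin c → ℕ) (Y : Ω → Fin c → ℕ)
    (hXm : Measurable X) (hZm : Measurable Z)
    (hY : ∀ ω i, Y ω i = ∑ j, Z ω j i)
    (hXindep : iIndepFun (m := fun _ : Fin d => (inferInstance : MeasurableSpace ℕ))
      (fun j ω => X ω j) P)
    (hXdist : ∀ (j : Fin d) (k : ℕ), P {ω | X ω j = k} = poissonENN (lam j) k)
    (hMark : ∀ (x : Fin d → ℕ) (z : Fin d → Fin c → ℕ),
      P {ω | X ω = x ∧ Z ω = z}
        = P {ω | X ω = x} * ∏ j, multinomialENN (x j) (fun i => A i j) (z j)) :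
    iIndepFun (m := fun _ : Fin c => (inferInstance : MeasurableSpace ℕ))
        (fun i ω => Y ω i) P ∧
      ∀ (i : Fin c) (k : ℕ), P {ω | Y ω i = k} = poissonENN (∑ j, A i j * lam j) k := by
  lift A to Fin c → Fin d → ℝ≥0 using fun i j => (hA i j).1
  lift lam to Fin d → ℝ≥0 using hlam
  beta_reduce at hAcol hXdist ⊢
  have hXlaw : ∀ j, HasLaw (fun ω => X ω j) (poissonMeasure (lam j)) P := fun j =>
    hasLaw_of_measure_preimage_singleton (by fun_prop) fun k => by
      rw [← poissonENN_coe]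
      exact hXdist j k
  have hW := hasLaw_marks_of_poisson (fun j => mod_cast hAcol j) hXm hZm hXindep hXlaw hMark
  have hYlaw : ∀ i, HasLaw (fun ω => Y ω i) (poissonMeasure (∑ j, A i j * lam j)) P := by
    simp_rw [hY]
    exact fun i =>
      (hasLaw_sum_pi_poissonMeasure _).comp ((measurePreserving_eval _ i).comp_hasLaw hW)
  refine ⟨?_, fun i k => ?_⟩
  · simp_rw [hY]
    exact hW.iIndepFun_of_pi.comp (fun _ v => ∑ j, v j) fun _ => by fun_prop
  · rw [(hYlaw i).measure_eq (p := (· = k)) (measurableSet_singleton k)]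
    exact_mod_cast (poissonENN_coe _ k).symm

/-- Let `X` be a multivariate Poisson random vector (independent coordinates
`X j ~ Po(lam j)`, `lam j ≥ 0`) and let `Y = A ∘ X` be the multinomial re-marking of `X`
with parameters `A ∈ [0,1]^{c×d}` whose columns sum to at most 1. Then `Y` is multivariate
Poisson with parameter `A lam`: the coordinates `Y i` are independent with
`Y i ~ Po(∑ j, A i j * lam j)`. -/
theorem remarking_of_poisson
    {Ω : Type*} [MeasurableSpace Ω] (P : Measure Ω) [IsProbabilityMeasure P]
    {c d : ℕ} (A : Fin c → Fin d → ℝ)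
    (hA : ∀ i j, A i j ∈ Set.Icc (0 : ℝ) 1) (hAcol : ∀ j, ∑ i, A i j ≤ 1)
    (lam : Fin d → ℝ) (hlam : ∀ j, 0 ≤ lam j)
    (X : Ω → Fin d → ℕ) (Z : Ω → Fin d → Fin c → ℕ) (Y : Ω → Fin c → ℕ)
    (hXm : Measurable X) (hZm : Measurable Z)
    (hY : ∀ ω i, Y ω i = ∑ j, Z ω j i)
    (hXindep : iIndepFun (m := fun _ : Fin d => (inferInstance : MeasurableSpace ℕ))
      (fun j ω => X ω j) P)
    (hXdist : ∀ (j : Fin d) (k : ℕ), P {ω | X ω j = k} = poissonENN (lam j) k)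
    (hMark : ∀ (x : Fin d → ℕ) (z : Fin d → Fin c → ℕ),
      P {ω | X ω = x ∧ Z ω = z}
        = P {ω | X ω = x} * ∏ j, multinomialENN (x j) (fun i => A i j) (z j)) :
    iIndepFun (m := fun _ : Fin c => (inferInstance : MeasurableSpace ℕ))
        (fun i ω => Y ω i) P ∧
      ∀ (i : Fin c) (k : ℕ), P {ω | Y ω i = k} = poissonENN (∑ j, A i j * lam j) k :=
  remarking_of_poisson_general P A hA hAcol lam hlam X Z Y hXm hZm hY hXindep hXdist hMark
end

section
/- Let X = (X_1,…,X_d) be a multivariate Hermite random vector Herm(μ, Σ), i.e. X_i = U_i + Σ_j V_{ij} + Σ_k V_{ki} where U_i ~ Po(α_i) and V_{ij} ~ Po(β_{ij}) (1 ≤ i, j ≤ d) are all independent, with μ_i = α_i + Σ_j β_{ij} + Σ_k β_{ki}, Σ_{ii} = 2β_{ii}, and Σ_{ij} = β_{ij} + β_{ji} for i ≠ j. Let A = (a_{ij}) ∈ [0,1]^{c×d} be a matrix whose columns a_j satisfy |a_j| ≤ 1. Then the multinomial re-marking Y = A ∘ X is multivariate Hermite with parameters Herm(Aμ, A Σ Aᵀ),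 provided A Σ Aᵀ and Aμ admit such a representation; equivalently, the multivariate FMGF of Y is Φ_Y(t) = exp( (Aμ)ᵀ t + ½ tᵀ (A Σ Aᵀ) t ). -/
open MeasureTheory ProbabilityTheory ENNReal

/-!
Conditionally on `X`, each of the `X j` points of type `j` receives an independent multinomial
mark, whose probability generating function at `s = 1 + t` is
`q j = 1 - ∑ i, A i j + ∑ i, A i j * s i = 1 + (Aᵀ t) j`. Hence the FMGF of `Y` at `t` is the
probability generating function of `X` at `q`. In the Poisson representation of `X` this
generating function factorises: `U i` contributes `exp (α i * (q i - 1))`, and `V j k`, which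
is counted once in coordinate `j` and once in coordinate `k`, contributes
`exp (β j k * (q j * q k - 1))`. Expanding the exponent in `x = q - 1 = Aᵀ t` and collecting
terms by `μ` and `Σ` gives `(A μ)ᵀ t + ½ tᵀ (A Σ Aᵀ) t`.
-/

open Finset

theorem ENNReal.tsum_pi_prod_eq_prod_tsum {κ : Type*} [Countable κ] :
    ∀ {m : ℕ} (f : Fin m → κ → ℝ≥0∞),
      ∑' g : Fin m → κ, ∏ i, f i (g i) = ∏ i, ∑' k, f i k
  | 0, f => by
    rw [tsum_eq_single (fun i : Fin 0 => i.elim0) fun g hg =>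
      (hg (funext fun i => i.elim0)).elim]
    simp
  | m + 1, f => by
    rw [← (Fin.consEquiv fun _ : Fin (m + 1) => κ).tsum_eq, ENNReal.tsum_prod',
      Fin.prod_univ_succ, ← ENNReal.tsum_pi_prod_eq_prod_tsum, ← ENNReal.tsum_mul_right]
    simp [Fin.consEquiv, Fin.prod_univ_succ, ENNReal.tsum_mul_left]

theorem ENNReal.tsum_tsum_ite_mul {α β γ : Type*} [DecidableEq α] (F : β → γ → α)
    (w : β → γ → ℝ≥0∞) (h : α → ℝ≥0∞) :
    ∑' x, (∑' u, ∑' v, if F u v = x then w u v else 0) * h x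
      = ∑' u, ∑' v, w u v * h (F u v) := by
  simp_rw [← ENNReal.tsum_mul_right, ite_mul, zero_mul]
  rw [ENNReal.tsum_comm]
  refine tsum_congr fun u => ?_
  rw [ENNReal.tsum_comm]
  exact tsum_congr fun v => by simp only [eq_comm (a := F u v), tsum_ite_eq]

theorem ENNReal.prod_ofReal_pow {ι : Type*} (s : Finset ι) {f : ι → ℝ}
    (hf : ∀ i ∈ s, 0 ≤ f i) (k : ι → ℕ) :
    ∏ i ∈ s, ENNReal.ofReal (f i) ^ k i = ENNReal.ofReal (∏ i ∈ s, f i ^ k i) := by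
  rw [ENNReal.ofReal_prod_of_nonneg fun i hi => pow_nonneg (hf i hi) _]
  exact prod_congr rfl fun i hi => (ENNReal.ofReal_pow (hf i hi) _).symm

theorem lintegral_comp_eq_tsum_tsum_measure {Ω α γ : Type*} [MeasurableSpace Ω]
    {P : Measure Ω} [MeasurableSpace α] [MeasurableSingletonClass α] [Countable α]
    [MeasurableSpace γ] [MeasurableSingletonClass γ] [Countable γ]
    {X : Ω → α} {Z : Ω → γ} (hX : Measurable X) (hZ : Measurable Z)
    (f : γ → ℝ≥0∞) :
    ∫⁻ ω, f (Z ω) ∂P = ∑' x, ∑' z, f z * P {ω | X ω = x ∧ Z ω = z} := by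
  have hXZ : Measurable fun ω => (X ω, Z ω) := hX.prodMk hZ
  rw [← lintegral_map (f := fun p : α × γ => f p.2) (measurable_of_countable _) hXZ,
    lintegral_countable', ← ENNReal.tsum_prod]
  refine tsum_congr fun p => ?_
  rw [Measure.map_apply hXZ (measurableSet_singleton p)]
  congr 2
  ext ω
  exact Prod.ext_iff

theorem integral_prod_pow_sum_eq_toReal_tsum {Ω : Type*} [MeasurableSpace Ω] (P : Measure Ω)
    {c d : ℕ} {X : Ω → Fin d → ℕ} {Z : Ω → Fin d → Fin c → ℕ} (hX : Measurable X)
    (hZ : Measurable Z) {s : Fin c → ℝ} (hs : ∀ i, 0 ≤ s i) :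
    ∫ ω, ∏ i, s i ^ (∑ j, Z ω j i) ∂P
      = (∑' x, ∑' z, (∏ j, ∏ i, ENNReal.ofReal (s i) ^ z j i)
          * P {ω | X ω = x ∧ Z ω = z}).toReal := by
  set F : (Fin d → Fin c → ℕ) → ℝ≥0∞ := fun z =>
    ∏ j, ∏ i, ENNReal.ofReal (s i) ^ z j i
  have hF : ∀ z, ∏ i, s i ^ (∑ j, z j i) = (F z).toReal := fun z => by
    simp only [F, ENNReal.toReal_prod, ENNReal.toReal_pow, ENNReal.toReal_ofReal (hs _),
      ← prod_pow_eq_pow_sum]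
    exact prod_comm
  simp only [hF]
  rw [integral_toReal (f := fun ω => F (Z ω))
      ((measurable_of_countable F).comp hZ).aemeasurable
      (ae_of_all _ fun ω => by simp [F, ENNReal.prod_lt_top]),
    lintegral_comp_eq_tsum_tsum_measure hX hZ]

theorem prod_pow_add_row_sum_add_col_sum {M : Type*} [CommMonoid M] {d : ℕ} (Q : Fin d → M)
    (u : Fin d → ℕ) (v : Fin d → Fin d → ℕ) :
    ∏ j, Q j ^ (u j + ∑ k, v j k + ∑ k, v k j)
      = (∏ j, Q j ^ u j) * ∏ j, ∏ k, (Q j * Q k) ^ v j k := by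
  simp only [pow_add, prod_mul_distrib, ← prod_pow_eq_pow_sum, mul_pow]
  rw [prod_comm (f := fun j k => Q j ^ v k j), mul_assoc]

theorem poissonENN_pgf {lam : ℝ} (hlam : 0 ≤ lam) {s : ℝ} (hs : 0 ≤ s) :
    ∑' k : ℕ, poissonENN lam k * ENNReal.ofReal s ^ k
      = ENNReal.ofReal (Real.exp (lam * (s - 1))) := by
  have hterm : ∀ k : ℕ, poissonENN lam k * ENNReal.ofReal s ^ k
      = ENNReal.ofReal (Real.exp (-lam) * ((lam * s) ^ k / k.factorial)) := fun k => by
    rw [poissonENN, ← ENNReal.ofReal_pow hs, ← ENNReal.ofReal_mul (by positivity)]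
    congr 1
    ring
  rw [tsum_congr hterm, ← ENNReal.ofReal_tsum_of_nonneg (fun k => by positivity)
    ((Real.summable_pow_div_factorial _).mul_left _), tsum_mul_left]
  rw [← congrFun NormedSpace.exp_eq_tsum_div, ← Real.exp_eq_exp_ℝ, ← Real.exp_add]
  congr 2
  ring

theorem tsum_prod_poissonENN_mul_pow {m : ℕ} {lam : Fin m → ℝ} (hlam : ∀ i, 0 ≤ lam i)
    {s : Fin m → ℝ} (hs : ∀ i, 0 ≤ s i) :
    ∑' u : Fin m → ℕ, ∏ i, poissonENN (lam i) (u i) * ENNReal.ofReal (s i) ^ u i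
      = ENNReal.ofReal (Real.exp (∑ i, lam i * (s i - 1))) := by
  rw [ENNReal.tsum_pi_prod_eq_prod_tsum fun i k =>
      poissonENN (lam i) k * ENNReal.ofReal (s i) ^ k, Real.exp_sum,
    ENNReal.ofReal_prod_of_nonneg fun i _ => (Real.exp_pos _).le]
  exact prod_congr rfl fun i _ => poissonENN_pgf (hlam i) (hs i)

noncomputable def hermiteENN {d : ℕ} (α : Fin d → ℝ) (β : Fin d → Fin d → ℝ)
    (x : Fin d → ℕ) : ℝ≥0∞ :=
  ∑' u : Fin d → ℕ, ∑' v : Fin d → Fin d → ℕ,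
    if (∀ i, u i + (∑ j, v i j) + ∑ j, v j i = x i) then
      (∏ i, poissonENN (α i) (u i)) * ∏ i, ∏ j, poissonENN (β i j) (v i j)
    else 0

theorem hermiteENN_pgf {d : ℕ} {α : Fin d → ℝ} {β : Fin d → Fin d → ℝ}
    (hα : ∀ i, 0 ≤ α i) (hβ : ∀ i j, 0 ≤ β i j) {q : Fin d → ℝ}
    (hq : ∀ j, 0 ≤ q j) :
    ∑' x, hermiteENN α β x * ∏ j, ENNReal.ofReal (q j) ^ x j
      = ENNReal.ofReal
          (Real.exp (∑ i, α i * (q i - 1) + ∑ j, ∑ k, β j k * (q j * q k - 1))) := by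
  have hqq : ∀ j k, ENNReal.ofReal (q j) * ENNReal.ofReal (q k) = ENNReal.ofReal (q j * q k) :=
    fun j k => (ENNReal.ofReal_mul (hq j)).symm
  simp only [hermiteENN, ← funext_iff, ENNReal.tsum_tsum_ite_mul,
    prod_pow_add_row_sum_add_col_sum, hqq]
  calc _ = (∑' u : Fin d → ℕ, ∏ i, poissonENN (α i) (u i) * ENNReal.ofReal (q i) ^ u i)
        * ∑' v : Fin d → Fin d → ℕ,
            ∏ j, ∏ k, poissonENN (β j k) (v j k) * ENNReal.ofReal (q j * q k) ^ v j k := by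
        rw [← ENNReal.tsum_mul_right]
        simp only [← ENNReal.tsum_mul_left, prod_mul_distrib]
        exact tsum_congr fun u => tsum_congr fun v => mul_mul_mul_comm _ _ _ _
    _ = ENNReal.ofReal (Real.exp (∑ i, α i * (q i - 1)))
        * ∏ j, ENNReal.ofReal (Real.exp (∑ k, β j k * (q j * q k - 1))) := by
        rw [tsum_prod_poissonENN_mul_pow hα hq, ENNReal.tsum_pi_prod_eq_prod_tsum
          fun j (w : Fin d → ℕ) =>
            ∏ k, poissonENN (β j k) (w k) * ENNReal.ofReal (q j * q k) ^ w k]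
        exact congrArg _ (prod_congr rfl fun j _ =>
          tsum_prod_poissonENN_mul_pow (hβ j) fun k => mul_nonneg (hq j) (hq k))
    _ = _ := by
        rw [← ENNReal.ofReal_prod_of_nonneg fun j _ => (Real.exp_pos _).le, ← Real.exp_sum,
          ← ENNReal.ofReal_mul (Real.exp_pos _).le, ← Real.exp_add]

theorem Nat.cast_multinomial_option_elim {c n : ℕ} {y : Fin c → ℕ} (hy : ∑ i, y i ≤ n) :
    (Nat.multinomial univ (fun o : Option (Fin c) => o.elim (n - ∑ i, y i) y) : ℝ)
      = n.factorial / ((∏ i, ((y i).factorial : ℝ)) * ((n - ∑ i, y i).factorial : ℝ)) := by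
  have h := Nat.multinomial_spec univ fun o : Option (Fin c) => o.elim (n - ∑ i, y i) y
  simp only [Fintype.prod_option, Fintype.sum_option, Option.elim_none, Option.elim_some,
    Nat.sub_add_cancel hy] at h
  rw [_root_.eq_div_iff (by positivity), ← h]
  push_cast
  ring

theorem multinomialENN_pgf {c : ℕ} (n : ℕ) {a : Fin c → ℝ} (ha : ∀ i, 0 ≤ a i)
    (ha1 : ∑ i, a i ≤ 1) {s : Fin c → ℝ} (hs : ∀ i, 0 ≤ s i) :
    ∑' y : Fin c → ℕ, multinomialENN n a y * ∏ i, ENNReal.ofReal (s i) ^ y i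
      = ENNReal.ofReal ((1 - ∑ i, a i + ∑ i, a i * s i) ^ n) := by
  set b : Option (Fin c) → ℝ := fun o => o.elim (1 - ∑ i, a i) fun i => a i * s i
  have hb : ∀ o, 0 ≤ b o := by
    rintro (_ | i)
    · exact sub_nonneg.2 ha1
    · exact mul_nonneg (ha i) (hs i)
  -- the mass of `y` is the multinomial weight of the outcome `(n - ∑ y, y)` on `Option (Fin c)`
  set φ : (Fin c → ℕ) → Option (Fin c) → ℕ := fun y o => o.elim (n - ∑ i, y i) y
  set T : (Option (Fin c) → ℕ) → ℝ≥0∞ := fun k =>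
    if k ∈ piAntidiag univ n then ENNReal.ofReal (Nat.multinomial univ k * ∏ o, b o ^ k o)
    else 0
  have hφ : Function.Injective φ := fun y y' h => funext fun i => congrFun h (some i)
  have hT : Function.support T ⊆ Set.range φ := by
    intro k hk
    have hkn : ∑ o, k o = n := by
      by_contra h
      exact hk (if_neg fun hmem => h (mem_piAntidiag.1 hmem).1)
    refine ⟨fun i => k (some i), funext fun o => ?_⟩
    cases o with
    | none => simp [φ, ← hkn, Fintype.sum_option]
    | some i => rfl
  have hterm : ∀ y, multinomialENN n a y * ∏ i, ENNReal.ofReal (s i) ^ y i = T (φ y) := by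
    intro y
    by_cases hy : ∑ i, y i ≤ n
    · have hmem : φ y ∈ piAntidiag univ n := by
        simp [φ, Fintype.sum_option, Nat.sub_add_cancel hy]
      simp only [T, if_pos hmem]
      rw [multinomialENN, if_pos hy, Nat.cast_multinomial_option_elim hy,
        ENNReal.prod_ofReal_pow _ fun i _ => hs i, ← ENNReal.ofReal_mul (mul_nonneg
          (mul_nonneg (by positivity) (prod_nonneg fun i _ => pow_nonneg (ha i) _))
          (pow_nonneg (sub_nonneg.2 ha1) _))]
      simp only [Fintype.prod_option, φ, b, Option.elim, mul_pow, prod_mul_distrib]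
      congr 1
      ring
    · have hnot : φ y ∉ piAntidiag univ n := by
        simp only [mem_piAntidiag, Fintype.sum_option, φ, Option.elim]
        omega
      rw [multinomialENN, if_neg hy, zero_mul]
      exact (if_neg hnot).symm
  rw [tsum_congr hterm, hφ.tsum_eq hT, tsum_eq_sum (s := piAntidiag univ n) fun k hk => if_neg hk,
    sum_congr rfl fun k hk => if_pos hk, ← ENNReal.ofReal_sum_of_nonneg fun k _ =>
      mul_nonneg (Nat.cast_nonneg _) (prod_nonneg fun o _ => pow_nonneg (hb o) _),
    ← sum_pow_eq_sum_piAntidiag, Fintype.sum_option]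
  rfl

theorem tsum_prod_multinomialENN_pgf {c d : ℕ} (A : Fin c → Fin d → ℝ)
    (hA : ∀ i j, 0 ≤ A i j) (hAcol : ∀ j, ∑ i, A i j ≤ 1) {s : Fin c → ℝ}
    (hs : ∀ i, 0 ≤ s i) (x : Fin d → ℕ) :
    ∑' z : Fin d → Fin c → ℕ, (∏ j, ∏ i, ENNReal.ofReal (s i) ^ z j i)
        * ∏ j, multinomialENN (x j) (fun i => A i j) (z j)
      = ∏ j, ENNReal.ofReal (1 - ∑ i, A i j + ∑ i, A i j * s i) ^ x j := by
  have hfactor : ∀ z : Fin d → Fin c → ℕ, (∏ j, ∏ i, ENNReal.ofReal (s i) ^ z j i)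
        * ∏ j, multinomialENN (x j) (fun i => A i j) (z j)
      = ∏ j, multinomialENN (x j) (fun i => A i j) (z j) * ∏ i, ENNReal.ofReal (s i) ^ z j i :=
    fun z => by rw [← prod_mul_distrib]; exact prod_congr rfl fun j _ => mul_comm _ _
  rw [tsum_congr hfactor, ENNReal.tsum_pi_prod_eq_prod_tsum fun j (y : Fin c → ℕ) =>
    multinomialENN (x j) (fun i => A i j) y * ∏ i, ENNReal.ofReal (s i) ^ y i]
  refine prod_congr rfl fun j _ => ?_
  rw [multinomialENN_pgf (x j) (fun i => hA i j) (hAcol j) hs, ENNReal.ofReal_pow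
    (add_nonneg (sub_nonneg.2 (hAcol j)) (sum_nonneg fun i _ => mul_nonneg (hA i j) (hs i)))]

theorem hermite_pgf_exponent_eq {d : ℕ} {α μ : Fin d → ℝ} {β Sig : Fin d → Fin d → ℝ}
    (hμ : ∀ i, μ i = α i + (∑ j, β i j) + ∑ k, β k i)
    (hSdiag : ∀ i, Sig i i = 2 * β i i) (hSoff : ∀ i j, i ≠ j → Sig i j = β i j + β j i)
    (x : Fin d → ℝ) :
    ∑ i, α i * x i + ∑ j, ∑ k, β j k * ((1 + x j) * (1 + x k) - 1)
      = ∑ j, μ j * x j + (1 / 2) * ∑ j, ∑ k, x j * Sig j k * x k := by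
  have hSig : ∀ j k, Sig j k = β j k + β k j := fun j k => by
    obtain rfl | hjk := eq_or_ne j k
    · rw [hSdiag]; ring
    · exact hSoff j k hjk
  have hβ : ∑ j, ∑ k, β j k * ((1 + x j) * (1 + x k) - 1)
      = ∑ j, ∑ k, β j k * x j + ∑ j, ∑ k, β k j * x j
          + ∑ j, ∑ k, β j k * (x j * x k) := by
    rw [sum_comm (f := fun j k => β k j * x j)]
    simp only [← sum_add_distrib]
    exact sum_congr rfl fun j _ => sum_congr rfl fun k _ => by ring
  have hSig_form : ∑ j, ∑ k, x j * Sig j k * x k = 2 * ∑ j, ∑ k, β j k * (x j * x k) := by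
    rw [two_mul]
    nth_rewrite 2 [sum_comm]
    simp only [← sum_add_distrib, hSig]
    exact sum_congr rfl fun j _ => sum_congr rfl fun k _ => by ring
  have hμx : ∑ j, μ j * x j
      = ∑ j, α j * x j + ∑ j, ∑ k, β j k * x j + ∑ j, ∑ k, β k j * x j := by
    simp only [hμ, add_mul, sum_mul, sum_add_distrib]
  rw [hβ, hSig_form, hμx]
  ring

theorem linear_add_quadratic_comp_transpose {c d : ℕ} (A : Fin c → Fin d → ℝ)
    (μ : Fin d → ℝ) (Sig : Fin d → Fin d → ℝ) (t : Fin c → ℝ) :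
    ∑ j, μ j * (∑ i, A i j * t i)
        + (1 / 2) * ∑ j, ∑ k, (∑ i, A i j * t i) * Sig j k * (∑ i, A i k * t i)
      = ∑ i, (∑ j, A i j * μ j) * t i
        + (1 / 2) * ∑ i, ∑ i', t i * (∑ j, ∑ j', A i j * Sig j j' * A i' j') * t i' := by
  have hlin : ∑ j, μ j * (∑ i, A i j * t i) = ∑ i, (∑ j, A i j * μ j) * t i := by
    simp only [mul_sum, sum_mul]
    rw [sum_comm]
    exact sum_congr rfl fun i _ => sum_congr rfl fun j _ => by ring
  have hquad : ∑ j, ∑ k, (∑ i, A i j * t i) * Sig j k * (∑ i, A i k * t i)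
      = ∑ i, ∑ i', t i * (∑ j, ∑ j', A i j * Sig j j' * A i' j') * t i' := by
    have hterm : ∀ j k, (∑ i, A i j * t i) * Sig j k * (∑ i, A i k * t i)
        = ∑ i, ∑ i', t i * (A i j * Sig j k * A i' k) * t i' := fun j k => by
      rw [mul_comm _ (Sig j k), mul_assoc, sum_mul_sum, mul_sum]
      exact sum_congr rfl fun i _ => by rw [mul_sum]; exact sum_congr rfl fun i' _ => by ring
    simp only [hterm]
    simp only [mul_sum, sum_mul]
    calc _ = ∑ j, ∑ i, ∑ k, ∑ i', t i * (A i j * Sig j k * A i' k) * t i' :=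
          sum_congr rfl fun j _ => sum_comm
      _ = ∑ i, ∑ j, ∑ k, ∑ i', t i * (A i j * Sig j k * A i' k) * t i' := sum_comm
      _ = _ := sum_congr rfl fun i _ =>
          (sum_congr rfl fun j _ => sum_comm).trans sum_comm
  rw [hlin, hquad]

theorem remarking_of_hermite_general
    {Ω : Type*} [MeasurableSpace Ω] (P : Measure Ω)
    {c d : ℕ} (A : Fin c → Fin d → ℝ)
    (hA : ∀ i j, A i j ∈ Set.Icc (0 : ℝ) 1) (hAcol : ∀ j, ∑ i, A i j ≤ 1)
    (α : Fin d → ℝ) (β : Fin d → Fin d → ℝ)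
    (hα : ∀ i, 0 ≤ α i) (hβ : ∀ i j, 0 ≤ β i j)
    (μ : Fin d → ℝ) (Sig : Fin d → Fin d → ℝ)
    (hμ : ∀ i, μ i = α i + (∑ j, β i j) + ∑ k, β k i)
    (hSdiag : ∀ i, Sig i i = 2 * β i i)
    (hSoff : ∀ i j, i ≠ j → Sig i j = β i j + β j i)
    (X : Ω → Fin d → ℕ) (Z : Ω → Fin d → Fin c → ℕ) (Y : Ω → Fin c → ℕ)
    (hXm : Measurable X) (hZm : Measurable Z)
    (hY : ∀ ω i, Y ω i = ∑ j, Z ω j i)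
    (hXdist : ∀ x : Fin d → ℕ, P {ω | X ω = x}
      = ∑' u : Fin d → ℕ, ∑' v : Fin d → Fin d → ℕ,
          if (∀ i, u i + (∑ j, v i j) + ∑ j, v j i = x i) then
            (∏ i, poissonENN (α i) (u i)) * ∏ i, ∏ j, poissonENN (β i j) (v i j)
          else 0)
    (hMark : ∀ (x : Fin d → ℕ) (z : Fin d → Fin c → ℕ),
      P {ω | X ω = x ∧ Z ω = z}
        = P {ω | X ω = x} * ∏ j, multinomialENN (x j) (fun i => A i j) (z j)) :
    ∀ t : Fin c → ℝ, (∀ i, 1 + t i ∈ Set.Icc (0 : ℝ) 1) →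
      ∫ ω, ∏ i, (1 + t i) ^ (Y ω i) ∂P
        = Real.exp ((∑ i, (∑ j, A i j * μ j) * t i)
            + (1 / 2) * ∑ i, ∑ i', t i * (∑ j, ∑ j', A i j * Sig j j' * A i' j') * t i') := by
  intro t ht
  have hs : ∀ i, 0 ≤ 1 + t i := fun i => (ht i).1
  have hA0 : ∀ i j, 0 ≤ A i j := fun i j => (hA i j).1
  set q : Fin d → ℝ := fun j => 1 - ∑ i, A i j + ∑ i, A i j * (1 + t i)
  have hq0 : ∀ j, 0 ≤ q j := fun j =>
    add_nonneg (sub_nonneg.2 (hAcol j)) (sum_nonneg fun i _ => mul_nonneg (hA0 i j) (hs i))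
  have hq : ∀ j, q j = 1 + ∑ i, A i j * t i := fun j => by
    simp only [q, mul_add, mul_one, sum_add_distrib]
    ring
  have hX : ∀ x, P {ω | X ω = x} = hermiteENN α β x := hXdist
  calc ∫ ω, ∏ i, (1 + t i) ^ (Y ω i) ∂P
      = (∑' x, hermiteENN α β x * ∏ j, ENNReal.ofReal (q j) ^ x j).toReal := by
        simp only [hY, integral_prod_pow_sum_eq_toReal_tsum P hXm hZm hs, hMark, hX,
          mul_left_comm (∏ j, ∏ i, _), ENNReal.tsum_mul_left,
          tsum_prod_multinomialENN_pgf A hA0 hAcol hs]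
        rfl
    _ = Real.exp (∑ i, α i * (q i - 1) + ∑ j, ∑ k, β j k * (q j * q k - 1)) := by
        rw [hermiteENN_pgf hα hβ hq0, ENNReal.toReal_ofReal (Real.exp_pos _).le]
    _ = _ := by
        simp only [hq, add_sub_cancel_left, hermite_pgf_exponent_eq hμ hSdiag hSoff,
          linear_add_quadratic_comp_transpose]

/-- Let `X ~ Herm(μ, Σ)` be a multivariate Hermite random vector: `X` has the distribution
of `(U i + ∑ j, V i j + ∑ k, V k i)_i` for independent `U i ~ Po(α i)`,
`V i j ~ Po(β i j)`, with `μ i = α i + ∑ j, β i j + ∑ k, β k i`, `Σ i i = 2 β i i` and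
`Σ i j = β i j + β j i` for `i ≠ j`. Let `Y = A ∘ X` be the multinomial re-marking of `X`
with parameters `A ∈ [0,1]^{c×d}` whose columns sum to at most 1. Then
`Y ~ Herm(A μ, A Σ Aᵀ)` is multivariate Hermite; equivalently, its multivariate factorial
moment generating function is `Φ_Y(t) = exp((A μ)ᵀ t + ½ tᵀ (A Σ Aᵀ) t)`. -/
theorem remarking_of_hermite
    {Ω : Type*} [MeasurableSpace Ω] (P : Measure Ω) [IsProbabilityMeasure P]
    {c d : ℕ} (A : Fin c → Fin d → ℝ)
    (hA : ∀ i j, A i j ∈ Set.Icc (0 : ℝ) 1) (hAcol : ∀ j, ∑ i, A i j ≤ 1)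
    (α : Fin d → ℝ) (β : Fin d → Fin d → ℝ)
    (hα : ∀ i, 0 ≤ α i) (hβ : ∀ i j, 0 ≤ β i j)
    (μ : Fin d → ℝ) (Sig : Fin d → Fin d → ℝ)
    (hμ : ∀ i, μ i = α i + (∑ j, β i j) + ∑ k, β k i)
    (hSdiag : ∀ i, Sig i i = 2 * β i i)
    (hSoff : ∀ i j, i ≠ j → Sig i j = β i j + β j i)
    (X : Ω → Fin d → ℕ) (Z : Ω → Fin d → Fin c → ℕ) (Y : Ω → Fin c → ℕ)
    (hXm : Measurable X) (hZm : Measurable Z)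
    (hY : ∀ ω i, Y ω i = ∑ j, Z ω j i)
    (hXdist : ∀ x : Fin d → ℕ, P {ω | X ω = x}
      = ∑' u : Fin d → ℕ, ∑' v : Fin d → Fin d → ℕ,
          if (∀ i, u i + (∑ j, v i j) + ∑ j, v j i = x i) then
            (∏ i, poissonENN (α i) (u i)) * ∏ i, ∏ j, poissonENN (β i j) (v i j)
          else 0)
    (hMark : ∀ (x : Fin d → ℕ) (z : Fin d → Fin c → ℕ),
      P {ω | X ω = x ∧ Z ω = z}
        = P {ω | X ω = x} * ∏ j, multinomialENN (x j) (fun i => A i j) (z j)) :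
    ∀ t : Fin c → ℝ, (∀ i, 1 + t i ∈ Set.Icc (0 : ℝ) 1) →
      ∫ ω, ∏ i, (1 + t i) ^ (Y ω i) ∂P
        = Real.exp ((∑ i, (∑ j, A i j * μ j) * t i)
            + (1 / 2) * ∑ i, ∑ i', t i * (∑ j, ∑ j', A i j * Sig j j' * A i' j') * t i') :=
  remarking_of_hermite_general P A hA hAcol α β hα hβ μ Sig hμ hSdiag hSoff X Z Y hXm hZm hY hXdist
    hMark
end

section
/- Let X be a random variable taking values in ℕ with finite second moment, let r ∈ (0,1) and b = 1 − r, and let (R, B) = (r, b) ∘ X be the multinomial marking of X with parameters (r, b), representing the numbers of red and blue balls. Then: (i) if Var(X) < E[X] then Cov(R, B) < 0; (ii) if Var(X) > E[X] then Cov(R, B) > 0; (iii) if Var(X) = E[X] then Cov(R, B) = 0. -/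
/-!
Given `X = n`, the red count is binomial: `P(R = k, B = n - k) = C(n,k) r^k b^(n-k)`, the value at
`r` of the Bernstein polynomial `b_{n,k}`. The first two factorial moments of the Bernstein basis
give `E[R | X] = r X`, `E[B | X] = b X` and `E[R B | X] = r b X (X - 1)`, hence
`Cov(R, B) = r b (E[X²] - E[X] - E[X]²) = r b (Var X - E X)`, whose sign is that of `Var X - E X`.
-/

open MeasureTheory ProbabilityTheory ENNReal

open Finset Polynomial

namespace bernsteinPolynomial

variable (n : ℕ) (x : ℝ)

lemma eval_eq (ν : ℕ) :
    (bernsteinPolynomial ℝ n ν).eval x = n.choose ν * x ^ ν * (1 - x) ^ (n - ν) := by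
  simp [bernsteinPolynomial]

lemma eval_nonneg {x : ℝ} (hx : x ∈ Set.Icc (0 : ℝ) 1) (ν : ℕ) :
    0 ≤ (bernsteinPolynomial ℝ n ν).eval x := by
  obtain ⟨h0, h1⟩ := hx
  have : 0 ≤ 1 - x := sub_nonneg.2 h1
  rw [eval_eq]
  positivity

lemma sum_eval : ∑ ν ∈ range (n + 1), (bernsteinPolynomial ℝ n ν).eval x = 1 := by
  simpa [eval_finsetSum] using congrArg (eval x) (bernsteinPolynomial.sum ℝ n)

lemma sum_mul_eval : ∑ ν ∈ range (n + 1), ν * (bernsteinPolynomial ℝ n ν).eval x = n * x := by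
  simpa [eval_finsetSum] using congrArg (eval x) (bernsteinPolynomial.sum_smul ℝ n)

lemma sum_descFactorial_mul_eval :
    ∑ ν ∈ range (n + 1), ((ν * (ν - 1) : ℕ) : ℝ) * (bernsteinPolynomial ℝ n ν).eval x
      = n * (n - 1) * x ^ 2 := by
  have h := congrArg (eval x) (bernsteinPolynomial.sum_mul_smul ℝ n)
  rcases n with _ | n
  · simp
  · simpa [eval_finsetSum] using h

lemma sum_sub_mul_eval :
    ∑ ν ∈ range (n + 1), ((n - ν : ℕ) : ℝ) * (bernsteinPolynomial ℝ n ν).eval x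
      = n * (1 - x) := by
  have h : ∀ ν ∈ range (n + 1), ((n - ν : ℕ) : ℝ) * (bernsteinPolynomial ℝ n ν).eval x
      = n * (bernsteinPolynomial ℝ n ν).eval x - ν * (bernsteinPolynomial ℝ n ν).eval x := by
    intro ν hν
    rw [Nat.cast_sub (Nat.lt_succ_iff.1 (mem_range.1 hν))]
    ring
  rw [sum_congr rfl h, sum_sub_distrib, ← mul_sum, sum_eval, sum_mul_eval]
  ring

lemma sum_mul_sub_mul_eval :
    ∑ ν ∈ range (n + 1), ν * ((n - ν : ℕ) : ℝ) * (bernsteinPolynomial ℝ n ν).eval x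
      = n * (n - 1) * (x * (1 - x)) := by
  have h : ∀ ν ∈ range (n + 1), ν * ((n - ν : ℕ) : ℝ) * (bernsteinPolynomial ℝ n ν).eval x
      = (n - 1 : ℝ) * (ν * (bernsteinPolynomial ℝ n ν).eval x)
        - ((ν * (ν - 1) : ℕ) : ℝ) * (bernsteinPolynomial ℝ n ν).eval x := by
    intro ν hν
    rcases ν with _ | ν
    · simp
    · push_cast [Nat.cast_sub (Nat.lt_succ_iff.1 (mem_range.1 hν))]
      ring
  rw [sum_congr rfl h, sum_sub_distrib, ← mul_sum, sum_mul_eval, sum_descFactorial_mul_eval]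
  ring

end bernsteinPolynomial

lemma multinomialENN_two (x : ℝ) (n : ℕ) (y : Fin 2 → ℕ) :
    multinomialENN n ![x, 1 - x] y =
      if y 0 + y 1 = n then ENNReal.ofReal ((bernsteinPolynomial ℝ n (y 0)).eval x) else 0 := by
  simp only [multinomialENN, Fin.sum_univ_two, Fin.prod_univ_two, Matrix.cons_val_zero,
    Matrix.cons_val_one, add_sub_cancel, sub_self]
  split_ifs with hle heq heq
  · obtain rfl := heq
    simp [bernsteinPolynomial, Nat.cast_choose ℝ (Nat.le_add_right (y 0) (y 1)), mul_assoc]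
  · simp [zero_pow (Nat.sub_ne_zero_of_lt (lt_of_le_of_ne hle heq))]
  · omega
  · rfl

lemma tsum_mul_multinomialENN_two (x : ℝ) (n : ℕ) (f : (Fin 2 → ℕ) → ℝ≥0∞) :
    ∑' y, f y * multinomialENN n ![x, 1 - x] y =
      ∑ k ∈ range (n + 1), f ![k, n - k] * ENNReal.ofReal ((bernsteinPolynomial ℝ n k).eval x) := by
  have hinj : Set.InjOn (fun k : ℕ => ![k, n - k]) (range (n + 1)) :=
    fun k _ l _ h => by simpa using congrFun h 0
  rw [tsum_eq_sum (s := (range (n + 1)).image fun k => ![k, n - k]), sum_image hinj]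
  · refine sum_congr rfl fun k hk => ?_
    have hkn := Nat.lt_succ_iff.1 (mem_range.1 hk)
    rw [multinomialENN_two, if_pos (by simpa using Nat.add_sub_of_le hkn)]
    rfl
  · intro y hy
    rw [multinomialENN_two, if_neg, mul_zero]
    intro hsum
    refine hy (mem_image.2 ⟨y 0, mem_range.2 (by omega), ?_⟩)
    ext i; fin_cases i <;> simp; omega

lemma lintegral_comp_eq_tsum {Ω α : Type*} [MeasurableSpace Ω] [MeasurableSpace α] [Countable α]
    [MeasurableSingletonClass α] (μ : Measure Ω) {X : Ω → α} (hX : Measurable X)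
    (g : α → ℝ≥0∞) : ∫⁻ ω, g (X ω) ∂μ = ∑' a, g a * μ (X ⁻¹' {a}) := by
  rw [← lintegral_map (measurable_of_countable g) hX, lintegral_countable']
  exact tsum_congr fun a => by rw [Measure.map_apply hX (measurableSet_singleton a)]

def IsMultinomialMarking {Ω : Type*} [MeasurableSpace Ω] (P : Measure Ω) {c : ℕ} (X : Ω → ℕ)
    (Y : Ω → Fin c → ℕ) (a : Fin c → ℝ) : Prop :=
  ∀ n y, P {ω | X ω = n ∧ Y ω = y} = P {ω | X ω = n} * multinomialENN n a y

section Marking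

variable {Ω : Type*} [MeasurableSpace Ω] {P : Measure Ω} {x : ℝ} {X : Ω → ℕ} {Y : Ω → Fin 2 → ℕ}

lemma lintegral_comp_marking (hX : Measurable X) (hY : Measurable Y)
    (hMark : IsMultinomialMarking P X Y ![x, 1 - x])
    (g : ℕ → (Fin 2 → ℕ) → ℝ≥0∞) :
    ∫⁻ ω, g (X ω) (Y ω) ∂P = ∫⁻ ω, ∑ k ∈ range (X ω + 1),
      g (X ω) ![k, X ω - k] * ENNReal.ofReal ((bernsteinPolynomial ℝ (X ω) k).eval x) ∂P := by
  calc ∫⁻ ω, g (X ω) (Y ω) ∂P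
      = ∑' p : ℕ × (Fin 2 → ℕ), g p.1 p.2 * P ((fun ω => (X ω, Y ω)) ⁻¹' {p}) :=
        lintegral_comp_eq_tsum P (hX.prodMk hY) (Function.uncurry g)
    _ = ∑' n, P {ω | X ω = n} * ∑' y, g n y * multinomialENN n ![x, 1 - x] y := by
        rw [ENNReal.tsum_prod']
        refine tsum_congr fun n => ?_
        rw [← ENNReal.tsum_mul_left]
        refine tsum_congr fun y => ?_
        have hpre : (fun ω => (X ω, Y ω)) ⁻¹' {(n, y)} = {ω | X ω = n ∧ Y ω = y} := by
          ext ω; simp [Prod.ext_iff]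
        rw [hpre, hMark]
        ring
    _ = _ := by
        refine (Eq.trans ?_ (lintegral_comp_eq_tsum P hX fun n => ∑ k ∈ range (n + 1),
          g n ![k, n - k] * ENNReal.ofReal ((bernsteinPolynomial ℝ n k).eval x)).symm)
        exact tsum_congr fun n => by rw [tsum_mul_multinomialENN_two, mul_comm]; rfl

lemma integral_comp_marking (hx : x ∈ Set.Icc (0 : ℝ) 1) (hX : Measurable X) (hY : Measurable Y)
    (hMark : IsMultinomialMarking P X Y ![x, 1 - x])
    {g : ℕ → (Fin 2 → ℕ) → ℝ} (hg : ∀ n y, 0 ≤ g n y) {φ : ℕ → ℝ}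
    (hφ : ∀ n, ∑ k ∈ range (n + 1), g n ![k, n - k] * (bernsteinPolynomial ℝ n k).eval x = φ n) :
    ∫ ω, g (X ω) (Y ω) ∂P = ∫ ω, φ (X ω) ∂P := by
  have hφ_nonneg : ∀ n, 0 ≤ φ n := fun n => hφ n ▸ sum_nonneg fun k _ =>
    mul_nonneg (hg _ _) (bernsteinPolynomial.eval_nonneg n hx k)
  rw [integral_eq_lintegral_of_nonneg_ae (.of_forall fun ω => hg _ _)
      ((measurable_of_countable (Function.uncurry g)).comp (hX.prodMk hY)).aestronglyMeasurable,
    integral_eq_lintegral_of_nonneg_ae (.of_forall fun ω => hφ_nonneg _)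
      ((measurable_of_countable φ).comp hX).aestronglyMeasurable]
  dsimp only
  rw [lintegral_comp_marking hX hY hMark fun n y => ENNReal.ofReal (g n y)]
  congr 1
  refine lintegral_congr fun ω => ?_
  rw [← hφ, ENNReal.ofReal_sum_of_nonneg fun k _ =>
    mul_nonneg (hg _ _) (bernsteinPolynomial.eval_nonneg _ hx k)]
  exact sum_congr rfl fun k _ => (ENNReal.ofReal_mul (hg _ _)).symm

lemma integral_marking_zero (hx : x ∈ Set.Icc (0 : ℝ) 1) (hX : Measurable X) (hY : Measurable Y)
    (hMark : IsMultinomialMarking P X Y ![x, 1 - x]) :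
    ∫ ω, (Y ω 0 : ℝ) ∂P = x * ∫ ω, (X ω : ℝ) ∂P :=
  (integral_comp_marking hx hX hY hMark (g := fun _ y => (y 0 : ℝ)) (fun _ _ => by positivity)
    (φ := fun n => x * n) fun n => by
      simpa [mul_comm x] using bernsteinPolynomial.sum_mul_eval n x).trans
    (integral_const_mul x _)

lemma integral_marking_one (hx : x ∈ Set.Icc (0 : ℝ) 1) (hX : Measurable X) (hY : Measurable Y)
    (hMark : IsMultinomialMarking P X Y ![x, 1 - x]) :
    ∫ ω, (Y ω 1 : ℝ) ∂P = (1 - x) * ∫ ω, (X ω : ℝ) ∂P :=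
  (integral_comp_marking hx hX hY hMark (g := fun _ y => (y 1 : ℝ)) (fun _ _ => by positivity)
    (φ := fun n => (1 - x) * n) fun n => by
      simpa [mul_comm (1 - x)] using bernsteinPolynomial.sum_sub_mul_eval n x).trans
    (integral_const_mul (1 - x) _)

lemma integral_marking_zero_mul_one [IsFiniteMeasure P] (hx : x ∈ Set.Icc (0 : ℝ) 1)
    (hX : Measurable X) (hY : Measurable Y) (hMark : IsMultinomialMarking P X Y ![x, 1 - x])
    (hX2 : MemLp (fun ω => (X ω : ℝ)) 2 P) :
    ∫ ω, (Y ω 0 : ℝ) * (Y ω 1 : ℝ) ∂P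
      = x * (1 - x) * (∫ ω, (X ω : ℝ) ^ 2 ∂P - ∫ ω, (X ω : ℝ) ∂P) := by
  rw [integral_comp_marking hx hX hY hMark (g := fun _ y => (y 0 : ℝ) * (y 1 : ℝ))
    (fun _ _ => by positivity) (φ := fun n => x * (1 - x) * ((n : ℝ) ^ 2 - n)) fun n => by
      simp only [Matrix.cons_val_zero, Matrix.cons_val_one]
      rw [bernsteinPolynomial.sum_mul_sub_mul_eval]
      ring,
    integral_const_mul, integral_sub hX2.integrable_sq (hX2.integrable one_le_two)]

lemma marking_covariance_eq [IsProbabilityMeasure P] (hx : x ∈ Set.Icc (0 : ℝ) 1)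
    (hX : Measurable X) (hY : Measurable Y) (hMark : IsMultinomialMarking P X Y ![x, 1 - x])
    (hX2 : MemLp (fun ω => (X ω : ℝ)) 2 P) :
    ∫ ω, (Y ω 0 : ℝ) * (Y ω 1 : ℝ) ∂P - (∫ ω, (Y ω 0 : ℝ) ∂P) * (∫ ω, (Y ω 1 : ℝ) ∂P)
      = x * (1 - x) * (variance (fun ω => (X ω : ℝ)) P - ∫ ω, (X ω : ℝ) ∂P) := by
  rw [integral_marking_zero_mul_one hx hX hY hMark hX2, integral_marking_zero hx hX hY hMark,
    integral_marking_one hx hX hY hMark, variance_eq_sub hX2]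
  simp only [Pi.pow_apply]
  ring

end Marking

/-- Suppose a random number `X` of balls (with finite second moment) are each painted red
with probability `r ∈ (0,1)` or blue with probability `b = 1 - r`, so that the numbers
`(R, B)` of red and blue balls form the multinomial marking `(r, b) ∘ X` of `X`. Then:
(i) if `Var(X) < E[X]` then `Cov(R, B) < 0`; (ii) if `Var(X) > E[X]` then `Cov(R, B) > 0`;
(iii) if `Var(X) = E[X]` then `Cov(R, B) = 0`; where
`Cov(R, B) = E[R B] - E[R] E[B]`. -/
theorem red_blue_covariance_sign
    {Ω : Type*} [MeasurableSpace Ω] (P : Measure Ω) [IsProbabilityMeasure P]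
    (r : ℝ) (hr : r ∈ Set.Ioo (0 : ℝ) 1) (b : ℝ) (hb : b = 1 - r)
    (X : Ω → ℕ) (Y : Ω → Fin 2 → ℕ) (hX : Measurable X) (hY : Measurable Y)
    (hX2 : MemLp (fun ω => (X ω : ℝ)) 2 P)
    (hMark : ∀ (n : ℕ) (y : Fin 2 → ℕ),
      P {ω | X ω = n ∧ Y ω = y} = P {ω | X ω = n} * multinomialENN n ![r, b] y)
    (R B : Ω → ℕ) (hR : ∀ ω, R ω = Y ω 0) (hB : ∀ ω, B ω = Y ω 1) :
    (variance (fun ω => (X ω : ℝ)) P < ∫ ω, (X ω : ℝ) ∂P →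
      (∫ ω, (R ω : ℝ) * (B ω : ℝ) ∂P)
        - (∫ ω, (R ω : ℝ) ∂P) * (∫ ω, (B ω : ℝ) ∂P) < 0) ∧
    (∫ ω, (X ω : ℝ) ∂P < variance (fun ω => (X ω : ℝ)) P →
      0 < (∫ ω, (R ω : ℝ) * (B ω : ℝ) ∂P)
        - (∫ ω, (R ω : ℝ) ∂P) * (∫ ω, (B ω : ℝ) ∂P)) ∧
    (variance (fun ω => (X ω : ℝ)) P = ∫ ω, (X ω : ℝ) ∂P →
      (∫ ω, (R ω : ℝ) * (B ω : ℝ) ∂P)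
        - (∫ ω, (R ω : ℝ) ∂P) * (∫ ω, (B ω : ℝ) ∂P) = 0) := by
  obtain ⟨hr0, hr1⟩ := hr
  subst hb
  have hcov := marking_covariance_eq ⟨hr0.le, hr1.le⟩ hX hY hMark hX2
  simp only [← hR, ← hB] at hcov
  have hrb : 0 < r * (1 - r) := mul_pos hr0 (sub_pos.2 hr1)
  rw [hcov]
  refine ⟨fun h => ?_, fun h => ?_, fun h => ?_⟩
  · exact mul_neg_of_pos_of_neg hrb (sub_neg.2 h)
  · exact mul_pos hrb (sub_pos.2 h)
  · rw [h, sub_self, mul_zero]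
end
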